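/- For programs P, Q over a finite universe U and alphabets H, B ⊆ U, the following are equivalent: (1) the ⟨H,B⟩-containment P ⊆_{⟨H,B⟩} Q fails (i.e., there exists R ∈ C_{⟨H,B⟩} with AS(P∪R) ⊄ AS(Q∪R)); (2) there exists a unary program R ∈ C_{⟨H,B⟩} with AS(P∪R) ⊄ AS(Q∪R); (3) there exists a witness against P ⊆_{⟨H,B⟩} Q. -/

import Mathlib

structure Rule (α : Type*) where
  head : Finset α
  pbody : Finset α
  nbody : Finset α
deriving DecidableEq

abbrev Program (α : Type*) := Finset (Rule α)

variable {α : Type*} [DecidableEq α]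

/-- An interpretation `Y` satisfies a rule. -/
def satRule (Y : Finset α) (r : Rule α) : Prop :=
  r.pbody ⊆ Y → r.nbody ∩ Y = ∅ → (r.head ∩ Y).Nonempty

/-- `Y` is a model of the program `P`. -/
def satProg (Y : Finset α) (P : Program α) : Prop := ∀ r ∈ P, satRule Y r

/-- The Gelfond–Lifschitz reduct `P^Y`. -/
def reduct (P : Program α) (Y : Finset α) : Program α :=
  (P.filter (fun r => r.nbody ∩ Y = ∅)).image (fun r => ⟨r.head, r.pbody, ∅⟩)

/-- `Y` is an answer set of `P`: a minimal model of `P^Y`. -/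
def isAS (P : Program α) (Y : Finset α) : Prop :=
  satProg Y (reduct P Y) ∧ ∀ Z, Z ⊂ Y → ¬ satProg Z (reduct P Y)

def heads (P : Program α) : Finset α := P.biUnion Rule.head
def bodies (P : Program α) : Finset α := P.biUnion (fun r => r.pbody ∪ r.nbody)

/-- A positive program: no default negation. -/
def Positive (P : Program α) : Prop := ∀ r ∈ P, r.nbody = ∅

/-- A unary program: only facts `a ←` and rules `a ← b`. -/
def Unary (P : Program α) : Prop :=
  ∀ r ∈ P, r.nbody = ∅ ∧ r.head.card = 1 ∧ r.pbody.card ≤ 1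

/-- Membership in the class `C_⟨H,B⟩`. -/
def inClass (H B : Finset α) (P : Program α) : Prop := heads P ⊆ H ∧ bodies P ⊆ B

/-- `V ⪯_H^B Z`. -/
def preceq (H B V Z : Finset α) : Prop := V ∩ H ⊆ Z ∩ H ∧ Z ∩ B ⊆ V ∩ B

/-- `V ≺_H^B Z`. -/
def prec (H B V Z : Finset α) : Prop := preceq H B V Z ∧ V ∩ (H ∪ B) ≠ Z ∩ (H ∪ B)

/-- `Y` is an `H`-total model of `P`. -/
def Htotal (H : Finset α) (P : Program α) (Y : Finset α) : Prop :=
  satProg Y P ∧ ∀ Z, Z ⊂ Y → satProg Z (reduct P Y) → Z ∩ H ⊂ Y ∩ H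

/-- The containment `P ⊆_⟨H,B⟩ Q`. -/
def containsHB (H B : Finset α) (P Q : Program α) : Prop :=
  ∀ R : Program α, inClass H B R → ∀ Y, isAS (P ∪ R) Y → isAS (Q ∪ R) Y

/-- The equivalence `P ≡_⟨H,B⟩ Q`. -/
def equivHB (H B : Finset α) (P Q : Program α) : Prop :=
  ∀ R : Program α, inClass H B R → ∀ Y, isAS (P ∪ R) Y ↔ isAS (Q ∪ R) Y

/-- A witness against `P ⊆_⟨H,B⟩ Q`. -/
def Witness (H B : Finset α) (P Q : Program α) (X Y : Finset α) : Prop :=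
  X ⊆ Y ∧ Htotal H P Y ∧
    (satProg Y Q → X ⊂ Y ∧ satProg X (reduct Q Y) ∧
      ∀ X', preceq H B X X' → X' ⊂ Y → ¬ satProg X' (reduct P Y))

/-- `(X,Y)` is `⪯_H^B`-maximal for `P`. -/
def maximalHB (H B : Finset α) (P : Program α) (X Y : Finset α) : Prop :=
  satProg X (reduct P Y) ∧ ∀ X', prec H B X X' → X' ⊂ Y → ¬ satProg X' (reduct P Y)

/-- `(X,Y)` is an `⟨H,B⟩`-model of `P`. -/
def HBmodel (H B : Finset α) (P : Program α) (X Y : Finset α) : Prop :=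
  X ⊆ Y ∧ Htotal H P Y ∧
    (X ⊂ Y → ∃ X', X' ⊂ Y ∧ X' ∩ (H ∪ B) = X ∧ maximalHB H B P X' Y)

/-!
Failure of containment yields a witness: if `Y ∈ AS(P ∪ R) \ AS(Q ∪ R)` with `R ∈ C_⟨H,B⟩`, then
satisfaction of `R^Y` is preserved along `⪯_H^B` (heads of `R` lie in `H`, bodies in `B`), so
minimality of `Y` for `P ∪ R` makes `Y` an `H`-total model of `P`, and, when `Y ⊨ Q`, any model
`X ⊊ Y` of `(Q ∪ R)^Y` is a witness.

Conversely, a witness `(X, Y)` is realised by the unary program with facts `X ∩ H` and rules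
`a ← b` for `a ∈ (Y \ X) ∩ H`, `b ∈ (Y \ X) ∩ B`: a model `Z ⊊ Y` of `P^Y` and of these rules
either has `X ⪯_H^B Z`, or contains some `b ∈ (Y \ X) ∩ B` and hence all of `Y ∩ H`; the
witness excludes the first case and `H`-totality the second.
-/

section Reduct

variable {P Q R : Program α} {H B X X' Y Z : Finset α}

lemma mem_reduct {r' : Rule α} :
    r' ∈ reduct P Y ↔ ∃ r ∈ P, r.nbody ∩ Y = ∅ ∧ r' = ⟨r.head, r.pbody, ∅⟩ := by
  simp only [reduct, Finset.mem_image, Finset.mem_filter, and_assoc, eq_comm (b := r')]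

lemma reduct_union : reduct (P ∪ Q) Y = reduct P Y ∪ reduct Q Y := by
  simp only [reduct, Finset.filter_union, Finset.image_union]

lemma satProg_union : satProg Z (P ∪ Q) ↔ satProg Z P ∧ satProg Z Q := by
  simp only [satProg, Finset.mem_union, or_imp, forall_and]

lemma satProg_reduct_union : satProg Z (reduct (P ∪ Q) Y) ↔
    satProg Z (reduct P Y) ∧ satProg Z (reduct Q Y) := by
  rw [reduct_union, satProg_union]

lemma satProg_reduct_self : satProg Y (reduct P Y) ↔ satProg Y P := by
  simp only [satProg, mem_reduct, satRule]
  constructor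
  · intro h r hr hp hn
    exact h ⟨r.head, r.pbody, ∅⟩ ⟨r, hr, hn, rfl⟩ hp (Finset.empty_inter Y)
  · rintro h _ ⟨r, hr, hn, rfl⟩ hp -
    exact h r hr hp hn

lemma Positive.reduct_eq (hR : Positive R) : reduct R Y = R := by
  ext r
  rw [mem_reduct]
  constructor
  · rintro ⟨s, hs, -, rfl⟩
    rwa [← hR s hs]
  · intro hr
    exact ⟨r, hr, by rw [hR r hr, Finset.empty_inter], by rw [← hR r hr]⟩

lemma inClass_iff : inClass H B R ↔ ∀ r ∈ R, r.head ⊆ H ∧ r.pbody ∪ r.nbody ⊆ B := by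
  simp only [inClass, heads, bodies, Finset.biUnion_subset, ← forall₂_and]

lemma satProg_reduct_of_preceq (hR : inClass H B R) (hX : satProg X (reduct R Y))
    (hXX' : preceq H B X X') : satProg X' (reduct R Y) := by
  rintro _ hr' hp -
  obtain ⟨r, hr, -, rfl⟩ := mem_reduct.mp hr'
  obtain ⟨hrH, hrB⟩ := inClass_iff.mp hR r hr
  obtain ⟨hH, hB⟩ := hXX'
  simp only [Finset.subset_iff, Finset.mem_inter, and_imp] at hH hB
  have hpX : r.pbody ⊆ X := fun b hb => (hB (hp hb) (hrB (Finset.mem_union_left _ hb))).1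
  obtain ⟨a, ha⟩ := hX _ hr' hpX (Finset.empty_inter X)
  obtain ⟨haHead, haX⟩ := Finset.mem_inter.mp ha
  exact ⟨a, Finset.mem_inter.mpr ⟨haHead, (hH haX (hrH haHead)).1⟩⟩

lemma not_satProg_reduct_of_isAS_union (hR : inClass H B R) (hY : isAS (P ∪ R) Y)
    (hX : satProg X (reduct R Y)) (hXZ : preceq H B X Z) (hZY : Z ⊂ Y) :
    ¬ satProg Z (reduct P Y) := fun hZ =>
  hY.2 Z hZY (satProg_reduct_union.mpr ⟨hZ, satProg_reduct_of_preceq hR hX hXZ⟩)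

lemma Htotal_of_isAS_union (hR : inClass H B R) (hY : isAS (P ∪ R) Y) : Htotal H P Y := by
  obtain ⟨hYP, hYR⟩ := satProg_union.mp (satProg_reduct_self.mp hY.1)
  refine ⟨hYP, fun Z hZY hZ => ?_⟩
  refine Finset.ssubset_iff_subset_ne.mpr
    ⟨Finset.inter_subset_inter_right hZY.subset, fun hZH => ?_⟩
  have hYZ : preceq H B Y Z := ⟨hZH.ge, Finset.inter_subset_inter_right hZY.subset⟩
  exact not_satProg_reduct_of_isAS_union hR hY (satProg_reduct_self.mpr hYR) hYZ hZY hZ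

lemma exists_witness_of_not_containsHB (h : ¬ containsHB H B P Q) :
    ∃ X Y, Witness H B P Q X Y := by
  simp only [containsHB, not_forall, exists_prop] at h
  obtain ⟨R, hR, Y, hPR, hQR⟩ := h
  have hYtotal := Htotal_of_isAS_union hR hPR
  by_cases hYQ : satProg Y Q
  · have hYR := (satProg_union.mp (satProg_reduct_self.mp hPR.1)).2
    have hYQR : satProg Y (reduct (Q ∪ R) Y) :=
      satProg_reduct_self.mpr (satProg_union.mpr ⟨hYQ, hYR⟩)
    obtain ⟨X, hXY, hX⟩ : ∃ X ⊂ Y, satProg X (reduct (Q ∪ R) Y) := by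
      simpa only [isAS, hYQR, true_and, not_forall, not_not, exists_prop] using hQR
    obtain ⟨hXQ, hXR⟩ := satProg_reduct_union.mp hX
    exact ⟨X, Y, hXY.subset, hYtotal, fun _ => ⟨hXY, hXQ,
      fun X' hXX' hX'Y => not_satProg_reduct_of_isAS_union hR hPR hXR hXX' hX'Y⟩⟩
  · exact ⟨Y, Y, subset_rfl, hYtotal, fun hYQ' => absurd hYQ' hYQ⟩

end Reduct

section WitnessProgram

variable {P Q : Program α} {H B X Y Z : Finset α}

lemma satRule_fact {a : α} : satRule Z ⟨{a}, ∅, ∅⟩ ↔ a ∈ Z := by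
  simp [satRule, Finset.Nonempty]

lemma satRule_unary {a b : α} : satRule Z ⟨{a}, {b}, ∅⟩ ↔ (b ∈ Z → a ∈ Z) := by
  simp [satRule, Finset.Nonempty]

def witnessProgram (H B X Y : Finset α) : Program α :=
  (X ∩ H).image (fun a => ⟨{a}, ∅, ∅⟩) ∪
    (((Y \ X) ∩ H) ×ˢ ((Y \ X) ∩ B)).image (fun p => ⟨{p.1}, {p.2}, ∅⟩)

lemma forall_mem_witnessProgram {p : Rule α → Prop} :
    (∀ r ∈ witnessProgram H B X Y, p r) ↔ (∀ a ∈ X ∩ H, p ⟨{a}, ∅, ∅⟩) ∧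
      ∀ a ∈ (Y \ X) ∩ H, ∀ b ∈ (Y \ X) ∩ B, p ⟨{a}, {b}, ∅⟩ := by
  simp only [witnessProgram, Finset.forall_mem_union, Finset.forall_mem_image,
    Finset.mem_product, Prod.forall, and_imp]
  exact and_congr Iff.rfl ⟨fun h a ha b hb => h a b ha hb, fun h a b ha hb => h a ha b hb⟩

lemma unary_witnessProgram : Unary (witnessProgram H B X Y) := by
  refine forall_mem_witnessProgram.mpr ⟨fun _ _ => ?_, fun _ _ _ _ => ?_⟩ <;> simp

lemma reduct_witnessProgram : reduct (witnessProgram H B X Y) Z = witnessProgram H B X Y :=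
  Positive.reduct_eq fun r hr => (unary_witnessProgram r hr).1

lemma inClass_witnessProgram : inClass H B (witnessProgram H B X Y) := by
  refine inClass_iff.mpr (forall_mem_witnessProgram.mpr ⟨fun a ha => ?_, fun a ha b hb => ?_⟩) <;>
    simp_all

lemma satProg_witnessProgram : satProg Z (witnessProgram H B X Y) ↔
    X ∩ H ⊆ Z ∧ ∀ a ∈ (Y \ X) ∩ H, ∀ b ∈ (Y \ X) ∩ B, b ∈ Z → a ∈ Z := by
  simp only [satProg, forall_mem_witnessProgram, satRule_fact, satRule_unary]
  rfl

lemma isAS_union_witnessProgram (hY : Htotal H P Y) (hXY : X ⊆ Y)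
    (hX : ∀ Z, Z ⊂ Y → satProg Z (reduct P Y) → ¬ preceq H B X Z) :
    isAS (P ∪ witnessProgram H B X Y) Y := by
  refine ⟨?_, fun Z hZY hZ => ?_⟩
  · rw [satProg_reduct_self, satProg_union, satProg_witnessProgram]
    exact ⟨hY.1, Finset.inter_subset_left.trans hXY,
      fun a ha _ _ _ => (Finset.mem_sdiff.mp (Finset.mem_inter.mp ha).1).1⟩
  rw [satProg_reduct_union, reduct_witnessProgram, satProg_witnessProgram] at hZ
  obtain ⟨hZP, hXHZ, hZrules⟩ := hZ
  by_cases hZB : Z ∩ B ⊆ X ∩ B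
  · exact hX Z hZY hZP ⟨Finset.subset_inter hXHZ Finset.inter_subset_right, hZB⟩
  obtain ⟨b, hbZB, hbXB⟩ := Finset.not_subset.mp hZB
  obtain ⟨hbZ, hbB⟩ := Finset.mem_inter.mp hbZB
  have hb : b ∈ (Y \ X) ∩ B := Finset.mem_inter.mpr
    ⟨Finset.mem_sdiff.mpr ⟨hZY.subset hbZ, fun hbX => hbXB (Finset.mem_inter.mpr ⟨hbX, hbB⟩)⟩, hbB⟩
  have hYHZ : Y ∩ H ⊆ Z ∩ H := by
    intro a ha
    obtain ⟨haY, haH⟩ := Finset.mem_inter.mp ha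
    refine Finset.mem_inter.mpr ⟨?_, haH⟩
    by_cases haX : a ∈ X
    · exact hXHZ (Finset.mem_inter.mpr ⟨haX, haH⟩)
    · exact hZrules a (by simp [haY, haX, haH]) b hb hbZ
  exact (hY.2 Z hZY hZP).2 hYHZ

lemma exists_unary_of_witness (hW : Witness H B P Q X Y) :
    ∃ R : Program α, Unary R ∧ inClass H B R ∧ ∃ Y, isAS (P ∪ R) Y ∧ ¬ isAS (Q ∪ R) Y := by
  obtain ⟨hXY, hYtotal, hW⟩ := hW
  by_cases hYQ : satProg Y Q
  · obtain ⟨hXY', hXQ, hXmax⟩ := hW hYQ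
    refine ⟨witnessProgram H B X Y, unary_witnessProgram, inClass_witnessProgram, Y,
      isAS_union_witnessProgram hYtotal hXY fun Z hZY hZ hXZ => hXmax Z hXZ hZY hZ,
      fun hQ => hQ.2 X hXY' ?_⟩
    rw [satProg_reduct_union, reduct_witnessProgram, satProg_witnessProgram]
    exact ⟨hXQ, Finset.inter_subset_left,
      fun _ _ b hb hbX => absurd hbX (Finset.mem_sdiff.mp (Finset.mem_inter.mp hb).1).2⟩
  · exact ⟨witnessProgram H B Y Y, unary_witnessProgram, inClass_witnessProgram, Y,
      isAS_union_witnessProgram hYtotal subset_rfl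
        fun Z hZY hZ hYZ => (hYtotal.2 Z hZY hZ).2 hYZ.1,
      fun hQ => hYQ (satProg_union.mp (satProg_reduct_self.mp hQ.1)).1⟩

end WitnessProgram

theorem witness_lemma_general (P Q : Program α) (H B : Finset α) :
    (¬ containsHB H B P Q ↔
      ∃ R : Program α, Unary R ∧ inClass H B R ∧
        ∃ Y, isAS (P ∪ R) Y ∧ ¬ isAS (Q ∪ R) Y) ∧
    (¬ containsHB H B P Q ↔ ∃ X Y, Witness H B P Q X Y) := by
  have of_unary : (∃ R : Program α, Unary R ∧ inClass H B R ∧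
      ∃ Y, isAS (P ∪ R) Y ∧ ¬ isAS (Q ∪ R) Y) → ¬ containsHB H B P Q := by
    rintro ⟨R, -, hR, Y, hPR, hQR⟩ h
    exact hQR (h R hR Y hPR)
  have of_witness : (∃ X Y, Witness H B P Q X Y) → ¬ containsHB H B P Q :=
    fun ⟨_, _, hW⟩ => of_unary (exists_unary_of_witness hW)
  exact ⟨⟨fun h => (exists_witness_of_not_containsHB h).elim
      fun _ ⟨_, hW⟩ => exists_unary_of_witness hW, of_unary⟩,
    ⟨exists_witness_of_not_containsHB, of_witness⟩⟩

theorem witness_lemma [Fintype α] (P Q : Program α) (H B : Finset α) :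
    (¬ containsHB H B P Q ↔
      ∃ R : Program α, Unary R ∧ inClass H B R ∧
        ∃ Y, isAS (P ∪ R) Y ∧ ¬ isAS (Q ∪ R) Y) ∧
    (¬ containsHB H B P Q ↔ ∃ X Y, Witness H B P Q X Y) :=
  witness_lemma_general P Q H B
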